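/- Let ABC be a triangle and let P, Q, R be the points where the bisectors of the exterior angles at A, B, C meet the lines BC, CA, AB respectively (assuming these intersections exist). Then P, Q, R are collinear. -/

import Mathlib

open EuclideanGeometry
open scoped RealInnerProductSpace

noncomputable section

abbrev Pt := EuclideanSpace ℝ (Fin 2)

/-!
Menelaus in barycentric form. The foot `P = B + c / (c - b) • (C - B)` satisfies
`(c - b) • P = c • C - b • B`, and cyclically for `Q` and `R`; adding the three identities gives
`(c - b) • P + (a - c) • Q + (b - a) • R = 0`, a nontrivial relation whose weights sum to zero,
i.e. an affine dependence of `P`, `Q`, `R`.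
-/

theorem collinear_of_smul_add_smul_add_smul_eq_zero {k V : Type*} [Field k] [AddCommGroup V]
    [Module k V] {p q r : V} {α β γ : k} (hsum : α + β + γ = 0)
    (hne : α ≠ 0 ∨ β ≠ 0 ∨ γ ≠ 0) (h : α • p + β • q + γ • r = 0) :
    Collinear k ({p, q, r} : Set V) := by
  rw [collinear_iff_not_affineIndependent_set, affineIndependent_iff_of_fintype]
  intro hind
  have hw : ∑ i, ![α, β, γ] i = 0 := by simpa [Fin.sum_univ_three] using hsum
  have hzero := hind ![α, β, γ] hw
    (by simpa [Finset.weightedVSub_eq_linear_combination _ hw, Fin.sum_univ_three] using h)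
  exact hne.elim (· (hzero 0)) (·.elim (· (hzero 1)) (· (hzero 2)))

theorem sub_smul_add_div_sub_smul_sub {k V : Type*} [Field k] [AddCommGroup V] [Module k V]
    (x y : V) {s t : k} (h : s ≠ t) :
    (s - t) • (x + (s / (s - t)) • (y - x)) = s • y - t • x := by
  rw [smul_add, smul_smul, mul_div_cancel₀ _ (sub_ne_zero.mpr h), smul_sub, sub_smul]
  abel

theorem exterior_bisector_feet_collinear
    (A B C : Pt)
    (a b c : ℝ)
    (hbc : b ≠ c) (hca : c ≠ a) (hab : a ≠ b)
    (P Q R : Pt)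
    (hP : P = B + (c / (c - b)) • (C - B))
    (hQ : Q = C + (a / (a - c)) • (A - C))
    (hR : R = A + (b / (b - a)) • (B - A)) :
    Collinear ℝ ({P, Q, R} : Set Pt) := by
  refine collinear_of_smul_add_smul_add_smul_eq_zero (α := c - b) (β := a - c) (γ := b - a)
    (by ring) (Or.inr (Or.inr (sub_ne_zero.mpr hab.symm))) ?_
  rw [hP, hQ, hR, sub_smul_add_div_sub_smul_sub B C hbc.symm,
    sub_smul_add_div_sub_smul_sub C A hca.symm, sub_smul_add_div_sub_smul_sub A B hab.symm]
  abel
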